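/- For all n ≥ 1, √θ_{n+1} - √θ_n ≤ √(ln 6) - √(ln 2), with equality exactly at n = 1, where θ_n = ∑_{i=1}^n ln(p_i). -/

import Mathlib

noncomputable def p (n : ℕ) : ℕ := Nat.nth Nat.Prime (n - 1)

noncomputable def θ (n : ℕ) : ℝ := ∑ i ∈ Finset.Icc 1 n, Real.log (p i)

/-!
Write `c = √(log 6) - √(log 2) ≈ 0.506`. Since `θ (n + 1) = θ n + log p_{n+1}`, the strict
inequality `√θ_{n+1} - √θ_n < c` is equivalent to `log p_{n+1} < c² + 2c√θ_n`. For `n = 2` this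
is a sharp numerical check. For `n ≥ 3` it suffices, as `c > 1/2`, that
`log p_{n+1} ≤ 1/4 + √θ_n`. Once `p_n ≥ 2048` this follows from Bertrand's postulate
`p_{n+1} ≤ 2 p_n` and Chebyshev's bound `θ(x) ≥ x log 2 - log (x + 1) - 2 √x log x`, which give
`(log 2p_n)² ≤ θ_n`; the remaining `n` are covered by a few explicit primorials.
-/

open Real

lemma p_prime (n : ℕ) : (p n).Prime := Nat.prime_nth_prime _

lemma p_monotone : Monotone p := fun _ _ h =>
  Nat.nth_monotone Nat.infinite_setOfPred_prime (by omega)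

lemma p_eq (n q : ℕ) (hq : q.Prime := by norm_num)
    (h : Nat.count Nat.Prime q + 1 = n := by decide) : p n = q := by
  rw [p, ← h, Nat.add_sub_cancel, Nat.nth_count hq]

lemma p_succ_le_two_mul (n : ℕ) : p (n + 1) ≤ 2 * p n := by
  obtain ⟨q, hq, hpq, hq2⟩ := Nat.exists_prime_lt_and_le_two_mul (p n) (p_prime n).ne_zero
  have : n - 1 < Nat.count Nat.Prime q :=
    (Nat.lt_nth_iff_count_lt Nat.infinite_setOfPred_prime).2 hpq
  calc p (n + 1) ≤ p (Nat.count Nat.Prime q + 1) := p_monotone (by omega)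
    _ = q := p_eq _ _ hq rfl
    _ ≤ 2 * p n := hq2

lemma theta_succ (n : ℕ) : θ (n + 1) = θ n + log (p (n + 1)) :=
  Finset.sum_Icc_succ_top (by omega) _

lemma theta_monotone : Monotone θ := fun _ _ h =>
  Finset.sum_le_sum_of_subset_of_nonneg (Finset.Icc_subset_Icc_right h)
    fun i _ _ => log_natCast_nonneg (p i)

lemma theta_nonneg (n : ℕ) : 0 ≤ θ n :=
  Finset.sum_nonneg fun i _ => log_natCast_nonneg (p i)

lemma theta_eq_chebyshev_theta {n : ℕ} (hn : 1 ≤ n) : θ n = Chebyshev.theta (p n) := by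
  rw [Chebyshev.theta_eq_sum_primesLE_log, θ]
  refine Finset.sum_nbij p (fun i hi => ?_) (fun i hi j hj hij => ?_) (fun q hq => ?_)
    fun _ _ => rfl
  · simp only [Finset.mem_Icc] at hi
    simp only [Nat.primesLE_eq_filter_range, Finset.mem_filter, Finset.mem_range]
    exact ⟨Nat.lt_succ_of_le (p_monotone hi.2), p_prime i⟩
  · simp only [Finset.coe_Icc, Set.mem_Icc] at hi hj
    have := Nat.nth_injective Nat.infinite_setOfPred_prime hij
    omega
  · simp only [Nat.primesLE_eq_filter_range, Finset.coe_filter, Finset.mem_range,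
      Set.mem_ofPred_eq] at hq
    have : Nat.count Nat.Prime q ≤ n - 1 :=
      (Nat.count_le_iff_le_nth Nat.infinite_setOfPred_prime).2 (Nat.lt_succ_iff.1 hq.1)
    exact ⟨Nat.count Nat.Prime q + 1, Finset.mem_Icc.2 ⟨by omega, by omega⟩, p_eq _ _ hq.2 rfl⟩

lemma theta_eq_log_primorial {n : ℕ} (hn : 1 ≤ n) : θ n = log (primorial (p n)) := by
  rw [theta_eq_chebyshev_theta hn, Chebyshev.theta_eq_log_primorial, Nat.floor_natCast]

lemma theta_one : θ 1 = log 2 := by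
  rw [theta_eq_log_primorial le_rfl, p_eq 1 2, show primorial 2 = 2 by decide]
  norm_num

lemma theta_two : θ 2 = log 6 := by
  rw [theta_eq_log_primorial (by norm_num), p_eq 2 3, show primorial 3 = 6 by decide]
  norm_num

lemma natCast_mul_log_le_of_pow_le {a b : ℕ} (i j : ℕ) (ha : 0 < a) (h : a ^ i ≤ b ^ j) :
    (i : ℝ) * log a ≤ j * log b := by
  rw [← log_pow, ← log_pow]
  exact log_le_log (by positivity) (by exact_mod_cast h)

lemma sqrt_log_six_ge : 1.338566 ≤ √(log 6) := by
  refine le_sqrt_of_sq_le ?_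
  rw [show (6 : ℝ) = 2 * 3 by norm_num, log_mul (by norm_num) (by norm_num)]
  linarith [log_two_gt_d9, log_three_gt_d9]

lemma sqrt_log_two_le : √(log 2) ≤ 0.8325547 :=
  (sqrt_le_left (by norm_num)).2 (by linarith [log_two_lt_d9])

lemma sqrt_log_six_sub_sqrt_log_two_ge : 0.5060113 ≤ √(log 6) - √(log 2) := by
  linarith [sqrt_log_six_ge, sqrt_log_two_le]

-- The decimals are the bounds of `Real.log_two_lt_d9` and `Real.log_two_gt_d9`.
lemma log_le_quarter_add_sqrt_log {P Q : ℕ} (a b c d : ℕ) (hP : 0 < P := by norm_num)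
    (hb : 0 < b := by norm_num) (hd : 0 < d := by norm_num)
    (hPa : P ^ b ≤ 2 ^ a := by norm_num) (hQc : 2 ^ c ≤ Q ^ d := by norm_num)
    (h : ((a : ℝ) / b * 0.6931471808 - 1 / 4) ^ 2 ≤ c / d * 0.6931471803 := by norm_num) :
    log P ≤ 1 / 4 + √(log Q) := by
  have hb' : (0 : ℝ) < b := by exact_mod_cast hb
  have hd' : (0 : ℝ) < d := by exact_mod_cast hd
  have hlogP : log P ≤ a / b * 0.6931471808 := by
    have := natCast_mul_log_le_of_pow_le b a hP hPa
    rw [div_mul_eq_mul_div, le_div_iff₀ hb']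
    push_cast at this
    nlinarith [log_two_lt_d9]
  have hlogQ : c / d * 0.6931471803 ≤ log Q := by
    have := natCast_mul_log_le_of_pow_le c d two_pos hQc
    rw [div_mul_eq_mul_div, div_le_iff₀ hd']
    push_cast at this
    nlinarith [log_two_gt_d9]
  linarith [le_sqrt_of_sq_le (h.trans hlogQ)]

lemma eighth_root_poly_bound {v : ℝ} (hv : 2.59 ≤ v) :
    (0.7 + 8 * (v - 1)) ^ 2 + (0.7 + 8 * (v - 1)) + 2 * v ^ 4 * (8 * (v - 1)) ≤ 0.69 * v ^ 8 := by
  obtain ⟨t, ht, rfl⟩ : ∃ t : ℝ, 0 ≤ t ∧ v = 2.59 + t := ⟨v - 2.59, by linarith, by ring⟩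
  rw [← sub_nonneg]
  ring_nf
  positivity

-- With `v = x^(1/8)`, the bound `log x ≤ 8 (v - 1)` reduces this to a polynomial inequality in `v`.
lemma sq_log_two_mul_le {x : ℝ} (hx : 2048 ≤ x) :
    log (2 * x) ^ 2 ≤ x * log 2 - log (x + 1) - 2 * √x * log x := by
  set v := x ^ ((8 : ℕ) : ℝ)⁻¹
  have hv8 : v ^ 8 = x := rpow_inv_natCast_pow (by linarith) (by norm_num)
  have hv0 : 0 ≤ v := rpow_nonneg (by linarith) _
  have hv : 2.59 ≤ v := le_of_pow_le_pow_left₀ (n := 8) (by norm_num) hv0 (by rw [hv8]; linarith)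
  have hsqrt : √x = v ^ 4 := by
    rw [← hv8, show v ^ 8 = (v ^ 4) ^ 2 by ring, sqrt_sq (by positivity)]
  have hlog : log x ≤ 8 * (v - 1) := by
    rw [← hv8, log_pow]
    push_cast
    linarith [log_le_sub_one_of_pos (show 0 < v by linarith)]
  have hlog0 : 0 ≤ log x := log_nonneg (by linarith)
  have hlogx1 : log (x + 1) ≤ log 2 + log x := by
    rw [← log_mul (by norm_num) (by positivity)]
    exact log_le_log (by positivity) (by linarith)
  have hl2 := log_two_lt_d9
  rw [log_mul (by norm_num) (by positivity), hsqrt]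
  calc (log 2 + log x) ^ 2 ≤ (0.7 + 8 * (v - 1)) ^ 2 :=
        pow_le_pow_left₀ (by positivity) (by linarith) 2
    _ ≤ 0.69 * v ^ 8 - (0.7 + 8 * (v - 1)) - 2 * v ^ 4 * (8 * (v - 1)) := by
        linarith [eighth_root_poly_bound hv]
    _ ≤ x * log 2 - log (x + 1) - 2 * v ^ 4 * log x := by
        rw [hv8]
        nlinarith [log_two_gt_d9, mul_le_mul_of_nonneg_left hlog (pow_nonneg hv0 4)]

lemma log_p_succ_le_sqrt_theta {n : ℕ} (hn : 1 ≤ n) (h : 2048 ≤ p n) :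
    log (p (n + 1)) ≤ √(θ n) := by
  refine le_sqrt_of_sq_le ?_
  have hbertrand : log (p (n + 1)) ≤ log (2 * p n) :=
    log_le_log (by exact_mod_cast (p_prime _).pos) (by exact_mod_cast p_succ_le_two_mul n)
  calc log (p (n + 1)) ^ 2 ≤ log (2 * p n) ^ 2 :=
        pow_le_pow_left₀ (log_natCast_nonneg _) hbertrand 2
    _ ≤ p n * log 2 - log (p n + 1) - 2 * √(p n) * log (p n) :=
        sq_log_two_mul_le (by exact_mod_cast h)
    _ ≤ Chebyshev.theta (p n) := Chebyshev.theta_ge (p n)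
    _ = θ n := (theta_eq_chebyshev_theta hn).symm

lemma log_p_succ_le_of_primorial_bound {n k P : ℕ} (hk : 1 ≤ k) (hkn : k ≤ n) (hP : p (n + 1) ≤ P)
    (h : log P ≤ 1 / 4 + √(log (primorial (p k)))) :
    log (p (n + 1)) ≤ 1 / 4 + √(θ n) := by
  rw [← theta_eq_log_primorial hk] at h
  have := log_le_log (by exact_mod_cast (p_prime _).pos) (Nat.cast_le.2 hP : (p (n + 1) : ℝ) ≤ P)
  linarith [sqrt_le_sqrt (theta_monotone hkn)]

lemma log_p_succ_le_quarter_add_sqrt_theta {n : ℕ} (hn : 3 ≤ n) :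
    log (p (n + 1)) ≤ 1 / 4 + √(θ n) := by
  rcases le_or_gt 2048 (p n) with hlarge | hsmall
  · linarith [log_p_succ_le_sqrt_theta (by omega) hlarge]
  obtain rfl | rfl | h | h | h | h :
      n = 3 ∨ n = 4 ∨ (5 ≤ n ∧ n < 8) ∨ (8 ≤ n ∧ n < 12) ∨ (12 ≤ n ∧ n < 21) ∨ 21 ≤ n := by
    omega
  · refine log_p_succ_le_of_primorial_bound (k := 3) (by norm_num) le_rfl (p_eq 4 7).le ?_
    rw [p_eq 3 5, show primorial 5 = 30 by decide]
    exact log_le_quarter_add_sqrt_log 45 16 9 2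
  · refine log_p_succ_le_of_primorial_bound (k := 4) (by norm_num) le_rfl (p_eq 5 11).le ?_
    rw [p_eq 4 7, show primorial 7 = 210 by decide]
    exact log_le_quarter_add_sqrt_log 7 2 7 1
  · refine log_p_succ_le_of_primorial_bound (k := 5) (by norm_num) h.1
      ((p_monotone (show n + 1 ≤ 8 by omega)).trans (p_eq 8 19).le) ?_
    rw [p_eq 5 11, show primorial 11 = 2310 by decide]
    exact log_le_quarter_add_sqrt_log 17 4 11 1
  · refine log_p_succ_le_of_primorial_bound (k := 8) (by norm_num) h.1
      ((p_monotone (show n + 1 ≤ 12 by omega)).trans (p_eq 12 37).le) ?_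
    rw [p_eq 8 19, show primorial 19 = 9699690 by decide]
    exact log_le_quarter_add_sqrt_log 11 2 23 1
  · refine log_p_succ_le_of_primorial_bound (k := 12) (by norm_num) h.1
      ((p_monotone (show n + 1 ≤ 21 by omega)).trans (p_eq 21 73).le) ?_
    rw [p_eq 12 37, show primorial 37 = 7420738134810 by decide]
    exact log_le_quarter_add_sqrt_log 7 1 42 1
  · refine log_p_succ_le_of_primorial_bound (k := 21) (P := 4096) (by norm_num) h
      (by linarith [p_succ_le_two_mul n]) ?_
    rw [p_eq 21 73, show primorial 73 = 40729680599249024150621323470 by decide]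
    exact log_le_quarter_add_sqrt_log 12 1 95 1

-- For `n = 2` the margin is about `0.0013` (`log 5 ≈ 1.6094` against `≈ 1.6107`).
lemma log_p_succ_lt {n : ℕ} (hn : 2 ≤ n) :
    log (p (n + 1)) < (√(log 6) - √(log 2)) ^ 2 + 2 * (√(log 6) - √(log 2)) * √(θ n) := by
  have hgap := sqrt_log_six_sub_sqrt_log_two_ge
  rcases hn.eq_or_lt with rfl | hn
  · have h5 := natCast_mul_log_le_of_pow_le (a := 5) (b := 2) 59 137 (by norm_num) (by norm_num)
    rw [theta_two, p_eq 3 5]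
    push_cast at h5 ⊢
    have hsq := pow_le_pow_left₀ (by norm_num) hgap 2
    have hmul := mul_le_mul hgap sqrt_log_six_ge (by norm_num) (by linarith)
    linarith [log_two_lt_d9]
  · nlinarith [log_p_succ_le_quarter_add_sqrt_theta hn, sqrt_nonneg (θ n)]

lemma sqrt_add_sub_sqrt_lt {a b c : ℝ} (ha : 0 ≤ a) (hc : 0 < c) (h : b < c ^ 2 + 2 * c * √a) :
    √(a + b) - √a < c := by
  have : a + b < (√a + c) ^ 2 := by nlinarith [sq_sqrt ha]
  linarith [(sqrt_lt' (by positivity)).2 this]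

lemma sqrt_theta_succ_sub_lt {n : ℕ} (hn : 2 ≤ n) :
    √(θ (n + 1)) - √(θ n) < √(log 6) - √(log 2) := by
  rw [theta_succ]
  exact sqrt_add_sub_sqrt_lt (theta_nonneg n) (by linarith [sqrt_log_six_sub_sqrt_log_two_ge]) (log_p_succ_lt hn)

theorem stmt15 : (∀ n : ℕ, 1 ≤ n →
      Real.sqrt (θ (n+1)) - Real.sqrt (θ n) ≤ Real.sqrt (Real.log 6) - Real.sqrt (Real.log 2)) ∧
    (∀ n : ℕ, 1 ≤ n →
      (Real.sqrt (θ (n+1)) - Real.sqrt (θ n) = Real.sqrt (Real.log 6) - Real.sqrt (Real.log 2) ↔ n = 1)) := by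
  have hone : √(θ 2) - √(θ 1) = √(log 6) - √(log 2) := by rw [theta_one, theta_two]
  refine ⟨fun n hn => ?_, fun n hn => ⟨fun h => ?_, fun h => by rw [h]; exact hone⟩⟩
  · rcases hn.eq_or_lt with rfl | hn
    · exact hone.le
    · exact (sqrt_theta_succ_sub_lt hn).le
  · by_contra hne
    exact (sqrt_theta_succ_sub_lt (by omega)).ne h
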